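/- Fix n < ω, and assume that for every finite quasi-order P the quasi-order i^F_{ω^n}(P) is a well-quasi-order. Then for any quasi-order Q: (1) every finite-range transfinite sequence σ over Q of length exactly ω^n is either indecomposable, or decomposes as a concatenation σ_0 + σ_1 where σ_0 is a finite-range sequence over Q of length < ω^n and σ_1 is an indecomposable finite-range sequence over Q of length exactly ω^n; and (2) every finite-range transfinite sequence σ over Q of length < ω^{n+1} decomposes as a finite concatenation σ_0 + σ_1 + ⋯ + σ_{k-1} of indecomposable finite-range sequences over Q, each of length < ω^{n+1}. -/

import Mathlib

universe u v

open Ordinal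

/-- A quasi-order: a reflexive transitive binary relation. -/
def IsQO {Q : Type u} (le : Q → Q → Prop) : Prop :=
  Reflexive le ∧ Transitive le

/-- A well-quasi-order: a quasi-order in which every infinite sequence of elements
contains a weakly increasing pair. -/
def IsWQO {Q : Type u} (le : Q → Q → Prop) : Prop :=
  IsQO le ∧ ∀ f : ℕ → Q, ∃ i j : ℕ, i < j ∧ le (f i) (f j)

/-- A (nonempty) transfinite sequence over `Q` : a length `> 0` together with values;
values at indices `≥ length` are irrelevant junk. -/
structure TSeq (Q : Type u) : Type (u + 1) where
  length : Ordinal.{u}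
  length_pos : 0 < length
  val : Ordinal.{u} → Q

/-- Sequence embeddability `σ ≼ τ` : there is a strictly increasing (hence injective) map
of the indices of `σ` into the indices of `τ` which respects the quasi-order on values. -/
def SeqLE {Q : Type u} (le : Q → Q → Prop) (σ τ : TSeq Q) : Prop :=
  ∃ f : Ordinal.{u} → Ordinal.{u},
    (∀ i, i < σ.length → f i < τ.length) ∧
    (∀ i j, i < j → j < σ.length → f i < f j) ∧
    (∀ i, i < σ.length → le (σ.val i) (τ.val (f i)))

/-- A sequence has finite range if only finitely many elements of `Q` occur in it. -/
def TSeq.FinRange {Q : Type u} (σ : TSeq Q) : Prop :=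
  (σ.val '' Set.Iio σ.length).Finite

/-- The proper tail of `σ` starting at index `δ` (of length `-δ + |σ|`). -/
noncomputable def TSeq.tail {Q : Type u} (σ : TSeq Q) (δ : Ordinal.{u})
    (h : δ < σ.length) : TSeq Q where
  length := σ.length - δ
  length_pos := Ordinal.lt_sub.mpr (by simpa using h)
  val := fun i => σ.val (δ + i)

/-- A sequence is indecomposable if it embeds into each of its proper tails. -/
def Indecomposable {Q : Type u} (le : Q → Q → Prop) (σ : TSeq Q) : Prop :=
  ∀ (δ : Ordinal.{u}) (_ : 0 < δ) (h : δ < σ.length), SeqLE le σ (σ.tail δ h)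

open Classical in
/-- Concatenation of transfinite sequences: a copy of `τ` placed after a copy of `σ`. -/
noncomputable def TSeq.concat {Q : Type u} (σ τ : TSeq Q) : TSeq Q where
  length := σ.length + τ.length
  length_pos := lt_of_lt_of_le σ.length_pos (le_add_right le_rfl)
  val := fun i => if i < σ.length then σ.val i else τ.val (i - σ.length)

/-- The concatenation `σ + τ₀ + τ₁ + ⋯` of a nonempty finite list of sequences. -/
noncomputable def TSeq.concatAll {Q : Type u} (σ : TSeq Q) (l : List (TSeq Q)) : TSeq Q :=
  l.foldl TSeq.concat σ

/-- Two sequences are equal as sequences: same length and same values below the length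
(the junk values beyond the length are irrelevant). -/
def TSeq.ValEq {Q : Type u} (σ τ : TSeq Q) : Prop :=
  σ.length = τ.length ∧ ∀ i, i < σ.length → σ.val i = τ.val i

/-- `i^F_α(Q)` : indecomposable nonempty finite-range transfinite sequences over `Q`
of length `< α`. -/
def iF (Q : Type u) (le : Q → Q → Prop) (α : Ordinal.{u}) : Type (u + 1) :=
  {σ : TSeq Q // σ.length < α ∧ σ.FinRange ∧ Indecomposable le σ}

/-!
Let `σ` have finite range and length `ω^(c+1) = ω^c * ω`. Either some tail of `σ` embeds into
arbitrarily late tails; such a tail is indecomposable, and it has full length because `ω^(c+1)`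
is additively principal. Or there are positions `d₀ < d₁ < ⋯`, cofinal in `|σ|`, whose tails are
pairwise non-embeddable. The blocks `σ[dᵢ, dⱼ)` have length `< ω^(c+1)`, so inductively they are
concatenations of indecomposables of length `< ω^n`, and by the hypothesis and Higman's lemma they
are well-quasi-ordered. If from some index on every block `[dᵢ, dⱼ)` embeds into some adjacent
block `[dⱼ, dₖ)`, these extensions chain into consecutive blocks each embedding into the next,
and gluing the embeddings embeds one of the tails into a later one. Otherwise there are infinitely
many separated blocks that admit no such extension, and the well-quasi-order gives one that does.

Part (2) follows by splitting off initial segments of length `ω^d`, by induction on `d`.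
-/

open Set

theorem Ordinal.sub_lt_sub_right_of_le {a b c : Ordinal} (hc : c ≤ a) (h : a < b) :
    a - c < b - c :=
  Ordinal.lt_sub.2 (by rwa [Ordinal.add_sub_cancel_of_le hc])

theorem Ordinal.sub_lt_self_of_le_of_lt_mul_omega0 {α β : Ordinal} (hβ : β ≤ α)
    (hα : α < β * ω) : α - β < α := by
  by_contra! h
  have habs : β + α = α :=
    le_antisymm ((add_le_add_right h β).trans (Ordinal.add_sub_cancel_of_le hβ).le) le_add_self
  exact (Ordinal.add_eq_right_iff_mul_omega0_le.1 habs).not_gt hα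

theorem exists_mem_Ico_succ_of_le_of_lt {α : Type*} [LinearOrder α] {e : ℕ → α} {x : α}
    (h₀ : e 0 ≤ x) (h : ∃ m, x < e m) : ∃ m, x ∈ Ico (e m) (e (m + 1)) := by
  classical
  obtain ⟨m, hm⟩ := Nat.exists_eq_add_one_of_ne_zero fun h0 : Nat.find h = 0 =>
    (Nat.find_spec h).not_ge (h0 ▸ h₀)
  refine ⟨m, not_lt.1 (Nat.find_min h ?_), ?_⟩
  · rw [hm]
    exact m.lt_succ_self
  · rw [← hm]
    exact Nat.find_spec h

theorem exists_strictMonoOn_of_blocks {α : Type*} [LinearOrder α] {e : ℕ → α} (he : StrictMono e)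
    {L : α} (he_lt : ∀ m, e m < L) (hcof : ∀ x < L, ∃ m, x < e m) {P : α → α → Prop}
    (f : ℕ → α → α)
    (hmaps : ∀ m, MapsTo (f m) (Ico (e m) (e (m + 1))) (Ico (e (m + 1)) (e (m + 2))))
    (hmono : ∀ m, StrictMonoOn (f m) (Ico (e m) (e (m + 1))))
    (hP : ∀ m, ∀ x ∈ Ico (e m) (e (m + 1)), P x (f m x)) :
    ∃ F : α → α, MapsTo F (Ico (e 0) L) (Ico (e 1) L) ∧ StrictMonoOn F (Ico (e 0) L) ∧
      ∀ x ∈ Ico (e 0) L, P x (F x) := by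
  have hblock : ∀ x ∈ Ico (e 0) L, ∃ m, x ∈ Ico (e m) (e (m + 1)) :=
    fun x hx => exists_mem_Ico_succ_of_le_of_lt hx.1 (hcof x hx.2)
  choose! K hK using hblock
  have hK_mono : ∀ x ∈ Ico (e 0) L, ∀ y ∈ Ico (e 0) L, x < y → K x ≤ K y := by
    intro x hx y hy hxy
    by_contra! h
    exact ((hK y hy).2.trans_le (he.monotone h)).not_ge ((hK x hx).1.trans hxy.le)
  refine ⟨fun x => f (K x) x, fun x hx => ?_, fun x hx y hy hxy => ?_,
    fun x hx => hP _ _ (hK x hx)⟩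
  · obtain ⟨h₁, h₂⟩ := hmaps _ (hK x hx)
    exact ⟨(he.monotone (Nat.succ_le_succ (Nat.zero_le _))).trans h₁, h₂.trans (he_lt _)⟩
  · rcases (hK_mono x hx y hy hxy).eq_or_lt with h | h
    · simp only [h]
      exact hmono (K y) (h ▸ hK x hx) (hK y hy) hxy
    · calc f (K x) x < e (K x + 2) := (hmaps _ (hK x hx)).2
        _ ≤ e (K y + 1) := he.monotone (by omega)
        _ ≤ f (K y) y := (hmaps _ (hK y hy)).1

theorem exists_strictMono_chain_of_extendable {r : ℕ → ℕ → ℕ → ℕ → Prop} {M : ℕ}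
    (h : ∀ i j, M ≤ i → i < j → ∃ k, j < k ∧ r i j j k) :
    ∃ a : ℕ → ℕ, StrictMono a ∧ ∀ m, r (a m) (a (m + 1)) (a (m + 1)) (a (m + 2)) := by
  choose! next hnext using h
  let p : ℕ → ℕ × ℕ := fun m => Nat.rec (M, M + 1) (fun _ q => (q.2, next q.1 q.2)) m
  have hp : ∀ m, M ≤ (p m).1 ∧ (p m).1 < (p m).2 := by
    intro m
    induction m with
    | zero => exact ⟨le_rfl, M.lt_succ_self⟩
    | succ m ih => exact ⟨ih.1.trans ih.2.le, (hnext _ _ ih.1 ih.2).1⟩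
  exact ⟨fun m => (p m).1, strictMono_nat_of_lt_succ fun m => (hp m).2,
    fun m => (hnext _ _ (hp m).1 (hp m).2).2⟩

/-- Read `r i j k l` as "the block `[i, j)` embeds into the block `[k, l)`". -/
theorem exists_strictMono_chain {r : ℕ → ℕ → ℕ → ℕ → Prop}
    (htrans : ∀ {i j k l p q}, r i j k l → r k l p q → r i j p q)
    (hsub : ∀ {i j k l}, i ≤ k → k < l → l ≤ j → r k l i j)
    (hwqo : ∀ f g : ℕ → ℕ, (∀ m, f m < g m) → ∃ m l, m < l ∧ r (f m) (g m) (f l) (g l)) :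
    ∃ a : ℕ → ℕ, StrictMono a ∧ ∀ m, r (a m) (a (m + 1)) (a (m + 1)) (a (m + 2)) := by
  by_cases hext : ∃ M, ∀ i j, M ≤ i → i < j → ∃ k, j < k ∧ r i j j k
  · obtain ⟨M, hM⟩ := hext
    exact exists_strictMono_chain_of_extendable hM
  push Not at hext
  exfalso
  choose i j hMi hij hstuck using hext
  let s : ℕ → ℕ := fun m => Nat.rec 0 (fun _ M => j M + 1) m
  have hs : StrictMono s :=
    strictMono_nat_of_lt_succ fun m =>
      ((hMi (s m)).trans (hij (s m)).le).trans_lt (j (s m)).lt_succ_self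
  have hsep : ∀ m l, m < l → j (s m) < i (s l) := fun m l hml =>
    (j (s m)).lt_succ_self.trans_le ((hs.monotone hml).trans (hMi (s l)))
  obtain ⟨m, l, hml, hr⟩ := hwqo (fun m => i (s m)) (fun m => j (s m)) fun m => hij (s m)
  exact hstuck (s m) (j (s l)) ((hsep m l hml).trans (hij _))
    (htrans hr (hsub (hsep m l hml).le (hij _) le_rfl))

section

variable {Q : Type u} {le : Q → Q → Prop}

theorem SeqLE.refl (hr : Reflexive le) (σ : TSeq Q) : SeqLE le σ σ :=
  ⟨id, fun _ h => h, fun _ _ h _ => h, fun _ _ => hr _⟩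

theorem SeqLE.trans (ht : Transitive le) {σ τ ρ : TSeq Q} (h₁ : SeqLE le σ τ)
    (h₂ : SeqLE le τ ρ) : SeqLE le σ ρ := by
  obtain ⟨f, hf_lt, hf_mono, hf_le⟩ := h₁
  obtain ⟨g, hg_lt, hg_mono, hg_le⟩ := h₂
  exact ⟨g ∘ f, fun i hi => hg_lt _ (hf_lt i hi),
    fun i j hij hj => hg_mono _ _ (hf_mono i j hij hj) (hf_lt j hj),
    fun i hi => ht (hf_le i hi) (hg_le _ (hf_lt i hi))⟩

theorem isPreorder_seqLE (hle : IsQO le) : IsPreorder (TSeq Q) (SeqLE le) where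
  refl := SeqLE.refl hle.1
  trans _ _ _ := SeqLE.trans hle.2

namespace TSeq

theorem ValEq.refl (σ : TSeq Q) : σ.ValEq σ := ⟨rfl, fun _ _ => rfl⟩

theorem ValEq.symm {σ τ : TSeq Q} (h : σ.ValEq τ) : τ.ValEq σ :=
  ⟨h.1.symm, fun i hi => (h.2 i (h.1 ▸ hi)).symm⟩

theorem ValEq.trans {σ τ ρ : TSeq Q} (h₁ : σ.ValEq τ) (h₂ : τ.ValEq ρ) : σ.ValEq ρ :=
  ⟨h₁.1.trans h₂.1, fun i hi => (h₁.2 i hi).trans (h₂.2 i (h₁.1 ▸ hi))⟩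

end TSeq

open TSeq

theorem SeqLE.congr {σ σ' τ τ' : TSeq Q} (h : SeqLE le σ τ) (hσ : σ.ValEq σ')
    (hτ : τ.ValEq τ') : SeqLE le σ' τ' := by
  obtain ⟨f, hf_lt, hf_mono, hf_le⟩ := h
  refine ⟨f, fun i hi => hτ.1 ▸ hf_lt i (hσ.1 ▸ hi),
    fun i j hij hj => hf_mono i j hij (hσ.1 ▸ hj), fun i hi => ?_⟩
  have hi' : i < σ.length := hσ.1 ▸ hi
  rw [← hσ.2 i hi', ← hτ.2 (f i) (hf_lt i hi')]
  exact hf_le i hi'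

namespace TSeq

noncomputable def seg (σ : TSeq Q) (a b : Ordinal.{u}) (h : a < b) : TSeq Q where
  length := b - a
  length_pos := Ordinal.lt_sub.mpr (by simpa using h)
  val := fun i => σ.val (a + i)

@[simp] theorem seg_length (σ : TSeq Q) {a b : Ordinal.{u}} (h : a < b) :
    (σ.seg a b h).length = b - a := rfl

theorem seg_val_mem_range (σ : TSeq Q) {a b : Ordinal.{u}} (h : a < b) (hb : b ≤ σ.length)
    {i : Ordinal.{u}} (hi : i < (σ.seg a b h).length) :
    (σ.seg a b h).val i ∈ σ.val '' Iio σ.length :=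
  ⟨a + i, (Ordinal.lt_sub.1 hi).trans_le hb, rfl⟩

theorem FinRange.seg {σ : TSeq Q} (hσ : σ.FinRange) {a b : Ordinal.{u}} (h : a < b)
    (hb : b ≤ σ.length) : (σ.seg a b h).FinRange :=
  hσ.subset fun _ ⟨_, hi, hx⟩ => hx ▸ σ.seg_val_mem_range h hb hi

theorem seqLE_seg_iff {σ τ : TSeq Q} {a b c d : Ordinal.{u}} (hab : a < b) (hcd : c < d) :
    SeqLE le (σ.seg a b hab) (τ.seg c d hcd) ↔ ∃ f : Ordinal.{u} → Ordinal.{u},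
      MapsTo f (Ico a b) (Ico c d) ∧ StrictMonoOn f (Ico a b) ∧
        ∀ i ∈ Ico a b, le (σ.val i) (τ.val (f i)) := by
  constructor
  · rintro ⟨g, hg_lt, hg_mono, hg_le⟩
    have hsub : ∀ i ∈ Ico a b, i - a < b - a := fun i hi =>
      Ordinal.sub_lt_sub_right_of_le hi.1 hi.2
    refine ⟨fun i => c + g (i - a),
      fun i hi => ⟨le_self_add, Ordinal.lt_sub.1 (hg_lt _ (hsub i hi))⟩,
      fun i hi j hj hij => add_lt_add_right (hg_mono _ _ (Ordinal.sub_lt_sub_right_of_le hi.1 hij)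
        (hsub j hj)) c, fun i hi => ?_⟩
    have := hg_le _ (hsub i hi)
    simp only [seg, Ordinal.add_sub_cancel_of_le hi.1] at this
    exact this
  · rintro ⟨f, hf_maps, hf_mono, hf_le⟩
    have hmem : ∀ i < b - a, a + i ∈ Ico a b := fun i hi => ⟨le_self_add, Ordinal.lt_sub.1 hi⟩
    refine ⟨fun i => f (a + i) - c,
      fun i hi => Ordinal.sub_lt_sub_right_of_le (hf_maps (hmem i hi)).1 (hf_maps (hmem i hi)).2,
      fun i j hij hj => Ordinal.sub_lt_sub_right_of_le (hf_maps (hmem i (hij.trans hj))).1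
        (hf_mono (hmem i (hij.trans hj)) (hmem j hj) (add_lt_add_right hij a)),
      fun i hi => ?_⟩
    change le (σ.val (a + i)) (τ.val (c + (f (a + i) - c)))
    rw [Ordinal.add_sub_cancel_of_le (hf_maps (hmem i hi)).1]
    exact hf_le _ (hmem i hi)

theorem seqLE_seg_of_le (hr : Reflexive le) (σ : TSeq Q) {a a' b' b : Ordinal.{u}}
    (ha : a ≤ a') (hab' : a' < b') (hb : b' ≤ b) :
    SeqLE le (σ.seg a' b' hab') (σ.seg a b (ha.trans_lt (hab'.trans_le hb))) :=
  (seqLE_seg_iff _ _).2 ⟨id, fun _ hi => ⟨ha.trans hi.1, hi.2.trans_le hb⟩,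
    strictMono_id.strictMonoOn _, fun _ _ => hr _⟩

theorem seqLE_tail_of_le (hr : Reflexive le) (σ : TSeq Q) {δ δ' : Ordinal.{u}}
    (hδ : δ < σ.length) (hδ' : δ' < σ.length) (h : δ ≤ δ') :
    SeqLE le (σ.tail δ' hδ') (σ.tail δ hδ) :=
  seqLE_seg_of_le hr σ h hδ' le_rfl

theorem tail_tail_valEq (σ : TSeq Q) {δ ε : Ordinal.{u}} (hδ : δ < σ.length)
    (hε : ε < (σ.tail δ hδ).length) :
    ((σ.tail δ hδ).tail ε hε).ValEq (σ.tail (δ + ε) (Ordinal.lt_sub.1 hε)) :=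
  ⟨Ordinal.sub_sub _ _ _, fun i _ => congrArg σ.val (add_assoc δ ε i).symm⟩

theorem ValEq.tail {σ τ : TSeq Q} (h : σ.ValEq τ) {δ : Ordinal.{u}} (hσ : δ < σ.length)
    (hτ : δ < τ.length) : (σ.tail δ hσ).ValEq (τ.tail δ hτ) :=
  ⟨congrArg (· - δ) h.1, fun _ hi => h.2 _ (Ordinal.lt_sub.1 hi)⟩

theorem tail_zero_valEq (σ : TSeq Q) (h : 0 < σ.length) : (σ.tail 0 h).ValEq σ :=
  ⟨Ordinal.sub_zero _, fun i _ => congrArg σ.val (zero_add i)⟩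

theorem FinRange.tail {σ : TSeq Q} (hσ : σ.FinRange) {δ : Ordinal.{u}} (h : δ < σ.length) :
    (σ.tail δ h).FinRange :=
  hσ.seg h le_rfl

end TSeq

theorem Indecomposable.congr {σ τ : TSeq Q} (hσ : Indecomposable le σ) (h : σ.ValEq τ) :
    Indecomposable le τ := fun δ hδ hδτ =>
  (hσ δ hδ (h.1 ▸ hδτ)).congr h (h.tail _ _)

namespace TSeq

@[simp] theorem concat_length (σ τ : TSeq Q) : (σ.concat τ).length = σ.length + τ.length := rfl

theorem concat_val_of_lt {σ τ : TSeq Q} {i : Ordinal.{u}} (h : i < σ.length) :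
    (σ.concat τ).val i = σ.val i :=
  if_pos h

theorem concat_val_of_le {σ τ : TSeq Q} {i : Ordinal.{u}} (h : σ.length ≤ i) :
    (σ.concat τ).val i = τ.val (i - σ.length) :=
  if_neg (not_lt.2 h)

theorem concat_val_add (σ τ : TSeq Q) (i : Ordinal.{u}) :
    (σ.concat τ).val (σ.length + i) = τ.val i := by
  rw [concat_val_of_le le_self_add, Ordinal.add_sub_cancel]

theorem sub_lt_length_of_lt_concat {σ τ : TSeq Q} {i : Ordinal.{u}} (h : σ.length ≤ i)
    (hi : i < (σ.concat τ).length) : i - σ.length < τ.length :=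
  (Ordinal.sub_lt_of_le h).2 hi

theorem seg_concat_seg_valEq (σ : TSeq Q) {a b c : Ordinal.{u}} (hab : a < b) (hbc : b < c) :
    ((σ.seg a b hab).concat (σ.seg b c hbc)).ValEq (σ.seg a c (hab.trans hbc)) := by
  refine ⟨?_, fun i hi => ?_⟩
  · change b - a + (c - b) = c - a
    rw [← add_right_inj a, ← add_assoc, Ordinal.add_sub_cancel_of_le hab.le,
      Ordinal.add_sub_cancel_of_le hbc.le, Ordinal.add_sub_cancel_of_le (hab.trans hbc).le]
  rcases lt_or_ge i (b - a) with h | h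
  · exact concat_val_of_lt h
  · rw [concat_val_of_le h]
    change σ.val (b + (i - (b - a))) = σ.val (a + i)
    conv_rhs => rw [← Ordinal.add_sub_cancel_of_le h, ← add_assoc,
      Ordinal.add_sub_cancel_of_le hab.le]

theorem seg_zero_concat_tail_valEq (σ : TSeq Q) {δ : Ordinal.{u}} (h₀ : 0 < δ)
    (h : δ < σ.length) : ((σ.seg 0 δ h₀).concat (σ.tail δ h)).ValEq σ :=
  (σ.seg_concat_seg_valEq h₀ h).trans (σ.tail_zero_valEq (h₀.trans h))

theorem ValEq.concat {σ σ' τ τ' : TSeq Q} (hσ : σ.ValEq σ') (hτ : τ.ValEq τ') :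
    (σ.concat τ).ValEq (σ'.concat τ') := by
  refine ⟨congrArg₂ (· + ·) hσ.1 hτ.1, fun i hi => ?_⟩
  rcases lt_or_ge i σ.length with h | h
  · rw [concat_val_of_lt h, concat_val_of_lt (hσ.1 ▸ h), hσ.2 i h]
  · rw [concat_val_of_le h, concat_val_of_le (hσ.1 ▸ h), ← hσ.1]
    exact hτ.2 _ (sub_lt_length_of_lt_concat h hi)

theorem concat_assoc_valEq (σ τ ρ : TSeq Q) :
    ((σ.concat τ).concat ρ).ValEq (σ.concat (τ.concat ρ)) := by
  refine ⟨add_assoc _ _ _, fun i hi => ?_⟩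
  rcases lt_or_ge i σ.length with h₁ | h₁
  · rw [concat_val_of_lt (h₁.trans_le le_self_add), concat_val_of_lt h₁, concat_val_of_lt h₁]
  rcases lt_or_ge i (σ.length + τ.length) with h₂ | h₂
  · rw [concat_val_of_lt (show i < (σ.concat τ).length from h₂), concat_val_of_le h₁,
      concat_val_of_le h₁, concat_val_of_lt ((Ordinal.sub_lt_of_le h₁).2 h₂)]
  · have h₂' : τ.length ≤ i - σ.length := (Ordinal.le_sub_of_le h₁).2 h₂
    rw [concat_val_of_le (show (σ.concat τ).length ≤ i from h₂), concat_val_of_le h₁,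
      concat_val_of_le h₂', Ordinal.sub_sub]
    rfl

end TSeq

theorem SeqLE.concat {σ σ' τ τ' : TSeq Q} (hσ : SeqLE le σ σ') (hτ : SeqLE le τ τ') :
    SeqLE le (σ.concat τ) (σ'.concat τ') := by
  obtain ⟨f, hf_lt, hf_mono, hf_le⟩ := hσ
  obtain ⟨g, hg_lt, hg_mono, hg_le⟩ := hτ
  refine ⟨fun i => if i < σ.length then f i else σ'.length + g (i - σ.length),
    fun i hi => ?_, fun i j hij hj => ?_, fun i hi => ?_⟩
  · by_cases h : i < σ.length
    · simpa only [if_pos h, concat_length] using (hf_lt i h).trans_le le_self_add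
    · simpa only [if_neg h, concat_length] using add_lt_add_right
        (hg_lt _ (sub_lt_length_of_lt_concat (not_lt.1 h) hi)) _
  · by_cases hj' : j < σ.length
    · simpa only [if_pos (hij.trans hj'), if_pos hj'] using hf_mono i j hij hj'
    by_cases hi' : i < σ.length
    · simpa only [if_pos hi', if_neg hj'] using (hf_lt i hi').trans_le le_self_add
    · simp only [if_neg hi', if_neg hj']
      exact add_lt_add_right (hg_mono _ _ (Ordinal.sub_lt_sub_right_of_le (not_lt.1 hi') hij)
        (sub_lt_length_of_lt_concat (not_lt.1 hj') hj)) _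
  · by_cases h : i < σ.length
    · simpa only [if_pos h, concat_val_of_lt h, concat_val_of_lt (hf_lt i h)] using hf_le i h
    · simpa only [if_neg h, concat_val_of_le (not_lt.1 h), concat_val_add] using
        hg_le _ (sub_lt_length_of_lt_concat (not_lt.1 h) hi)

theorem seqLE_concat_left (hr : Reflexive le) (σ τ : TSeq Q) : SeqLE le σ (σ.concat τ) :=
  ⟨id, fun _ hi => hi.trans_le le_self_add, fun _ _ h _ => h,
    fun _ hi => (concat_val_of_lt hi).symm ▸ hr _⟩

theorem seqLE_concat_right (hr : Reflexive le) (σ τ : TSeq Q) : SeqLE le τ (σ.concat τ) :=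
  ⟨(σ.length + ·), fun _ hi => add_lt_add_right hi _, fun _ _ h _ => add_lt_add_right h _,
    fun i _ => (concat_val_add σ τ i).symm ▸ hr _⟩

namespace TSeq

theorem ValEq.concatAll {σ σ' : TSeq Q} (h : σ.ValEq σ') (τs : List (TSeq Q)) :
    (TSeq.concatAll σ τs).ValEq (TSeq.concatAll σ' τs) := by
  induction τs generalizing σ σ' with
  | nil => exact h
  | cons τ τs ih => exact ih (h.concat (ValEq.refl τ))

theorem concat_concatAll_valEq (σ τ : TSeq Q) (τs : List (TSeq Q)) :
    (σ.concat (concatAll τ τs)).ValEq (concatAll σ (τ :: τs)) := by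
  induction τs generalizing σ τ with
  | nil => exact ValEq.refl _
  | cons τ' τs ih =>
    exact (ih σ (τ.concat τ')).trans ((concat_assoc_valEq σ τ τ').symm.concatAll τs)

end TSeq

theorem seqLE_concatAll_self (hr : Reflexive le) (ht : Transitive le) (σ : TSeq Q)
    (τs : List (TSeq Q)) : SeqLE le σ (concatAll σ τs) := by
  induction τs generalizing σ with
  | nil => exact SeqLE.refl hr σ
  | cons τ τs ih => exact (seqLE_concat_left hr σ τ).trans ht (ih _)

theorem seqLE_concatAll_of_sublistForall₂ (hr : Reflexive le) (ht : Transitive le)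
    {τs τs' : List (TSeq Q)} (h : List.SublistForall₂ (SeqLE le) τs τs') {σ σ' : TSeq Q}
    (hσ : SeqLE le σ σ') : SeqLE le (concatAll σ τs) (concatAll σ' τs') := by
  induction h generalizing σ σ' with
  | nil => exact hσ.trans ht (seqLE_concatAll_self hr ht σ' _)
  | cons hτ _ ih => exact ih (hσ.concat hτ)
  | cons_right _ ih => exact ih (hσ.trans ht (seqLE_concat_left hr σ' _))

theorem seqLE_concatAll_of_sublistForall₂_cons (hr : Reflexive le) (ht : Transitive le)
    {τ : TSeq Q} {τs τs' : List (TSeq Q)} (h : List.SublistForall₂ (SeqLE le) (τ :: τs) τs')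
    (σ : TSeq Q) : SeqLE le (concatAll τ τs) (concatAll σ τs') := by
  induction τs' generalizing σ with
  | nil => cases h
  | cons τ' τs' ih =>
    cases h with
    | cons hτ h =>
      exact seqLE_concatAll_of_sublistForall₂ hr ht h (hτ.trans ht (seqLE_concat_right hr σ τ'))
    | cons_right h => exact ih h _

theorem seqLE_concatAll_of_sublistForall₂_cons_cons (hr : Reflexive le) (ht : Transitive le)
    {τ τ' : TSeq Q} {τs τs' : List (TSeq Q)}
    (h : List.SublistForall₂ (SeqLE le) (τ :: τs) (τ' :: τs')) :
    SeqLE le (concatAll τ τs) (concatAll τ' τs') := by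
  cases h with
  | cons hτ h => exact seqLE_concatAll_of_sublistForall₂ hr ht h hτ
  | cons_right h => exact seqLE_concatAll_of_sublistForall₂_cons hr ht h τ'

def Decomposable (le : Q → Q → Prop) (σ : TSeq Q) : Prop :=
  ∃ τ τs, (∀ ρ ∈ τ :: τs, ρ.FinRange ∧ ρ.length ≤ σ.length ∧ Indecomposable le ρ) ∧
    σ.ValEq (concatAll τ τs)

theorem Indecomposable.decomposable {σ : TSeq Q} (h : Indecomposable le σ) (hfr : σ.FinRange) :
    Decomposable le σ :=
  ⟨σ, [], fun _ hρ => by obtain rfl := List.mem_singleton.1 hρ; exact ⟨hfr, le_rfl, h⟩,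
    ValEq.refl σ⟩

theorem Decomposable.of_valEq_concat {σ π₀ π₁ : TSeq Q} (hv : σ.ValEq (π₀.concat π₁))
    (h₀ : Decomposable le π₀) (h₁ : Decomposable le π₁) : Decomposable le σ := by
  obtain ⟨τ₀, τs₀, hτ₀, hv₀⟩ := h₀
  obtain ⟨τ₁, τs₁, hτ₁, hv₁⟩ := h₁
  have hlen₀ : π₀.length ≤ σ.length := hv.1 ▸ le_self_add
  have hlen₁ : π₁.length ≤ σ.length := hv.1 ▸ le_add_self
  refine ⟨τ₀, τs₀ ++ τ₁ :: τs₁, fun ρ hρ => ?_, ?_⟩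
  · have hρ' : ρ ∈ τ₀ :: τs₀ ∨ ρ ∈ τ₁ :: τs₁ := by
      simp only [List.mem_cons, List.mem_append] at hρ ⊢
      tauto
    rcases hρ' with h | h
    · exact (hτ₀ ρ h).imp_right (And.imp_left (·.trans hlen₀))
    · exact (hτ₁ ρ h).imp_right (And.imp_left (·.trans hlen₁))
  · simp only [concatAll, List.foldl_append]
    exact hv.trans ((hv₀.concat hv₁).trans (concat_concatAll_valEq _ _ _))

/-- Higman's lemma, applied to the lists of indecomposable factors. -/
theorem exists_seqLE_of_decomposable {α : Ordinal.{u}} (hle : IsQO le)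
    (hwqo : IsWQO (fun σ τ : iF Q le α => SeqLE le σ.1 τ.1)) (g : ℕ → TSeq Q)
    (hlen : ∀ k, (g k).length < α) (hdec : ∀ k, Decomposable le (g k)) :
    ∃ k l, k < l ∧ SeqLE le (g k) (g l) := by
  have := isPreorder_seqLE hle
  have hpwo : {ρ : TSeq Q | ρ.length < α ∧ ρ.FinRange ∧ Indecomposable le ρ}.PartiallyWellOrderedOn
      (SeqLE le) := fun f => hwqo.2 fun k => ⟨(f k).1, (f k).2⟩
  choose τ τs hτ hv using hdec
  obtain ⟨k, l, hkl, h⟩ := hpwo.partiallyWellOrderedOn_sublistForall₂ (SeqLE le) fun k =>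
    ⟨τ k :: τs k, fun ρ hρ => ⟨(hτ k ρ hρ).2.1.trans_lt (hlen k), (hτ k ρ hρ).1, (hτ k ρ hρ).2.2⟩⟩
  exact ⟨k, l, hkl,
    (seqLE_concatAll_of_sublistForall₂_cons_cons hle.1 hle.2 h).congr (hv k).symm (hv l).symm⟩

def TSeq.map {R : Type u} (f : Q → R) (σ : TSeq Q) : TSeq R :=
  ⟨σ.length, σ.length_pos, f ∘ σ.val⟩

theorem TSeq.exists_map_val_valEq {S : Set Q} (σ : TSeq Q) (h : ∀ i < σ.length, σ.val i ∈ S) :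
    ∃ σ' : TSeq S, (σ'.map Subtype.val).ValEq σ := by
  classical
  refine ⟨⟨σ.length, σ.length_pos, fun i =>
    if hi : i < σ.length then ⟨σ.val i, h i hi⟩ else ⟨σ.val 0, h 0 σ.length_pos⟩⟩,
    rfl, fun i hi => ?_⟩
  simp only [TSeq.map, Function.comp_apply]
  exact congrArg Subtype.val (dif_pos hi)

def IsWQOiFOfFinite (α : Ordinal.{u}) : Prop :=
  ∀ (P : Type u) (leP : P → P → Prop), Finite P → IsQO leP →
    IsWQO (fun σ τ : iF P leP α => SeqLE leP σ.1 τ.1)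

def DecomposableBelow (γ : Ordinal.{u}) : Prop :=
  ∀ (P : Type u) (leP : P → P → Prop), IsQO leP →
    ∀ σ : TSeq P, σ.FinRange → σ.length < γ → Decomposable leP σ

theorem exists_seqLE_of_mem_finite {α γ : Ordinal.{u}} (hyp : IsWQOiFOfFinite α)
    (hD : DecomposableBelow γ) (hγ : γ ≤ α) (hle : IsQO le) {S : Set Q} (hS : S.Finite)
    (g : ℕ → TSeq Q) (hlen : ∀ k, (g k).length < γ)
    (hval : ∀ k, ∀ i < (g k).length, (g k).val i ∈ S) :
    ∃ k l, k < l ∧ SeqLE le (g k) (g l) := by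
  choose g' hg' using fun k => (g k).exists_map_val_valEq (hval k)
  have : Finite S := hS.to_subtype
  have hleS : IsQO (fun a b : S => le a b) := ⟨fun a => hle.1 a, fun _ _ _ h h' => hle.2 h h'⟩
  have hlen' : ∀ k, (g' k).length < γ := fun k => (hg' k).1.trans_lt (hlen k)
  obtain ⟨k, l, hkl, h⟩ := exists_seqLE_of_decomposable hleS (hyp S _ this hleS) g'
    (fun k => (hlen' k).trans_le hγ) fun k => hD S _ hleS _ (Set.toFinite _) (hlen' k)
  exact ⟨k, l, hkl,
    (show SeqLE le ((g' k).map Subtype.val) ((g' l).map Subtype.val) from h).congr (hg' k) (hg' l)⟩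

theorem decomposable_of_length_lt_mul_omega0 {β : Ordinal.{u}}
    (hlt : ∀ σ : TSeq Q, σ.FinRange → σ.length < β → Decomposable le σ)
    (heq : ∀ σ : TSeq Q, σ.FinRange → σ.length = β → Decomposable le σ)
    (σ : TSeq Q) (hfr : σ.FinRange) (hσ : σ.length < β * ω) : Decomposable le σ := by
  suffices ∀ α, ∀ σ : TSeq Q, σ.length = α → σ.FinRange → σ.length < β * ω →
      Decomposable le σ from this _ σ rfl hfr hσ
  intro α
  induction α using WellFoundedLT.induction with
  | _ α ih =>
    rintro σ rfl hfr hσ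
    rcases lt_trichotomy σ.length β with h | h | h
    · exact hlt σ hfr h
    · exact heq σ hfr h
    have hβ : 0 < β := (eq_zero_or_pos β).resolve_left fun hβ => by simp [hβ] at hσ
    have htail : σ.length - β < σ.length := Ordinal.sub_lt_self_of_le_of_lt_mul_omega0 h.le hσ
    exact Decomposable.of_valEq_concat (σ.seg_zero_concat_tail_valEq hβ h).symm
      (heq _ (hfr.seg hβ h.le) (Ordinal.sub_zero β))
      (ih _ htail _ rfl (hfr.tail h) (htail.trans hσ))

def IndecomposableAfterPrefix (le : Q → Q → Prop) (β : Ordinal.{u}) (σ : TSeq Q) : Prop :=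
  Indecomposable le σ ∨
    ∃ σ₀ σ₁ : TSeq Q, σ₀.FinRange ∧ σ₀.length < β ∧ σ₁.FinRange ∧ σ₁.length = β ∧
      Indecomposable le σ₁ ∧ σ.ValEq (σ₀.concat σ₁)

theorem IndecomposableAfterPrefix.decomposable {β : Ordinal.{u}} {σ : TSeq Q}
    (h : IndecomposableAfterPrefix le β σ) (hfr : σ.FinRange)
    (hlt : ∀ σ : TSeq Q, σ.FinRange → σ.length < β → Decomposable le σ) : Decomposable le σ := by
  rcases h with h | ⟨σ₀, σ₁, h₀, hlen₀, h₁, -, hind, hv⟩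
  · exact h.decomposable hfr
  · exact .of_valEq_concat hv (hlt σ₀ h₀ hlen₀) (hind.decomposable h₁)

def TailRecurs (le : Q → Q → Prop) (σ : TSeq Q) (δ : Ordinal.{u}) (h : δ < σ.length) : Prop :=
  ∀ β < σ.length, ∃ δ', ∃ h' : δ' < σ.length, β ≤ δ' ∧ SeqLE le (σ.tail δ h) (σ.tail δ' h')

theorem TailRecurs.indecomposable (hle : IsQO le) {σ : TSeq Q} {δ : Ordinal.{u}}
    {hδ : δ < σ.length} (h : TailRecurs le σ δ hδ) : Indecomposable le (σ.tail δ hδ) := by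
  intro ε _ hε
  obtain ⟨δ', hδ', hle', hemb⟩ := h (δ + ε) (Ordinal.lt_sub.1 hε)
  exact (hemb.trans hle.2 (seqLE_tail_of_le hle.1 σ _ hδ' hle')).congr (ValEq.refl _)
    (σ.tail_tail_valEq hδ hε).symm

theorem TailRecurs.indecomposableAfterPrefix (hle : IsQO le) {σ : TSeq Q} (hfr : σ.FinRange)
    (hσ : IsPrincipal (· + ·) σ.length) {δ : Ordinal.{u}} {hδ : δ < σ.length}
    (h : TailRecurs le σ δ hδ) : IndecomposableAfterPrefix le σ.length σ := by
  rcases eq_zero_or_pos δ with rfl | hδ₀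
  · exact .inl ((h.indecomposable hle).congr (σ.tail_zero_valEq hδ))
  · refine .inr ⟨σ.seg 0 δ hδ₀, σ.tail δ hδ, hfr.seg hδ₀ hδ.le, ?_, hfr.tail hδ,
      Ordinal.sub_eq_of_add_eq (isPrincipal_add_iff_add_left_eq_self.1 hσ δ hδ),
      h.indecomposable hle, (σ.seg_zero_concat_tail_valEq hδ₀ hδ).symm⟩
    rwa [seg_length, Ordinal.sub_zero]

theorem exists_strictMono_not_seqLE_tail (hr : Reflexive le) {σ : TSeq Q}
    (μ : ℕ → Ordinal.{u}) (hμ : ∀ k, μ k < σ.length)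
    (hno : ∀ δ (h : δ < σ.length), ¬ TailRecurs le σ δ h) :
    ∃ (d : ℕ → Ordinal.{u}) (hd_lt : ∀ k, d k < σ.length), StrictMono d ∧
      (∀ k, μ k ≤ d (k + 1)) ∧
      ∀ i j, i < j → ¬ SeqLE le (σ.tail (d i) (hd_lt i)) (σ.tail (d j) (hd_lt j)) := by
  simp only [TailRecurs] at hno
  push Not at hno
  choose b hb_lt hb using hno
  have hb_gt : ∀ δ h, δ < b δ h := fun δ h =>
    not_le.1 fun hbδ => hb δ h δ h hbδ (SeqLE.refl hr _)
  let p : ℕ → {x // x < σ.length} := fun k =>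
    Nat.rec ⟨0, σ.length_pos⟩ (fun k q => ⟨max (μ k) (b q.1 q.2), max_lt (hμ k) (hb_lt _ _)⟩) k
  have hstep : ∀ k, b (p k).1 (p k).2 ≤ (p (k + 1)).1 := fun k => le_max_right _ _
  have hmono : StrictMono fun k => (p k).1 :=
    strictMono_nat_of_lt_succ fun k => (hb_gt _ _).trans_le (hstep k)
  exact ⟨fun k => (p k).1, fun k => (p k).2, hmono, fun k => le_max_left _ _,
    fun i j hij => hb _ _ _ _ ((hstep i).trans (hmono.monotone hij))⟩

theorem seqLE_tail_of_blocks {σ : TSeq Q} {e : ℕ → Ordinal.{u}} (he : StrictMono e)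
    (he_lt : ∀ m, e m < σ.length) (hcof : ∀ β < σ.length, ∃ m, β < e m)
    (hblock : ∀ m, SeqLE le (σ.seg (e m) (e (m + 1)) (he m.lt_succ_self))
      (σ.seg (e (m + 1)) (e (m + 2)) (he (m + 1).lt_succ_self))) :
    SeqLE le (σ.tail (e 0) (he_lt 0)) (σ.tail (e 1) (he_lt 1)) := by
  choose f hf_maps hf_mono hf_le using fun m => (seqLE_seg_iff _ _).1 (hblock m)
  obtain ⟨F, hF_maps, hF_mono, hF_le⟩ :=
    exists_strictMonoOn_of_blocks (P := fun i j => le (σ.val i) (σ.val j)) he he_lt hcof f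
      hf_maps hf_mono hf_le
  exact (seqLE_seg_iff (he_lt 0) (he_lt 1)).2 ⟨F, hF_maps, hF_mono, hF_le⟩

theorem exists_tailRecurs (hle : IsQO le) {σ : TSeq Q}
    (hblocks : ∀ g : ℕ → TSeq Q, (∀ k, (g k).length < σ.length) →
      (∀ k, ∀ i < (g k).length, (g k).val i ∈ σ.val '' Iio σ.length) →
        ∃ k l, k < l ∧ SeqLE le (g k) (g l))
    (μ : ℕ → Ordinal.{u}) (hμ : ∀ k, μ k < σ.length) (hcof : ∀ β < σ.length, ∃ k, β < μ k) :
    ∃ δ h, TailRecurs le σ δ h := by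
  by_contra! hno
  obtain ⟨d, hd_lt, hd, hμd, hbad⟩ := exists_strictMono_not_seqLE_tail hle.1 μ hμ hno
  obtain ⟨a, ha, hchain⟩ := exists_strictMono_chain (r := fun i j k l =>
      ∃ (h : i < j) (h' : k < l), SeqLE le (σ.seg (d i) (d j) (hd h)) (σ.seg (d k) (d l) (hd h')))
    (fun ⟨h₁, _, hx⟩ ⟨_, h₃, hy⟩ => ⟨h₁, h₃, hx.trans hle.2 hy⟩)
    (fun hik hkl hlj => ⟨hkl, hik.trans_lt (hkl.trans_le hlj),
      seqLE_seg_of_le hle.1 σ (hd.monotone hik) (hd hkl) (hd.monotone hlj)⟩)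
    (fun f g hfg => by
      obtain ⟨m, l, hml, h⟩ := hblocks (fun m => σ.seg (d (f m)) (d (g m)) (hd (hfg m)))
        (fun m => (Ordinal.sub_le_self _ _).trans_lt (hd_lt _))
        (fun m _ hi => σ.seg_val_mem_range _ (hd_lt _).le hi)
      exact ⟨m, l, hml, hfg m, hfg l, h⟩)
  refine hbad (a 0) (a 1) (ha zero_lt_one)
    (seqLE_tail_of_blocks (hd.comp ha) (fun m => hd_lt (a m)) (fun β hβ => ?_)
      fun m => (hchain m).2.2)
  obtain ⟨k, hk⟩ := hcof β hβ
  exact ⟨k + 1, hk.trans_le ((hμd k).trans (hd.monotone (ha.id_le _)))⟩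

theorem indecomposableAfterPrefix_of_length_eq_opow {α : Ordinal.{u}} (hyp : IsWQOiFOfFinite α)
    {d : ℕ} (hD : DecomposableBelow (ω ^ (d : Ordinal.{u}))) (hdα : ω ^ (d : Ordinal.{u}) ≤ α)
    (hle : IsQO le) (σ : TSeq Q) (hfr : σ.FinRange) (hlen : σ.length = ω ^ (d : Ordinal.{u})) :
    IndecomposableAfterPrefix le (ω ^ (d : Ordinal.{u})) σ := by
  rcases d with _ | c
  · refine .inl fun δ hδ hδσ => ?_
    rw [hlen, Nat.cast_zero, opow_zero, Order.lt_one_iff] at hδσ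
    exact absurd hδσ hδ.ne'
  have hω : σ.length = ω ^ (c : Ordinal.{u}) * ω := by
    rw [hlen, Nat.cast_succ, ← Order.succ_eq_add_one, opow_succ]
  obtain ⟨δ, hδ, hrec⟩ := exists_tailRecurs hle
    (fun g hg_lt hg_val => exists_seqLE_of_mem_finite hyp hD hdα hle hfr g (hlen ▸ hg_lt) hg_val)
    (fun k => ω ^ (c : Ordinal.{u}) * k)
    (fun k => hω ▸ mul_lt_mul_of_pos_left (natCast_lt_omega0 k) (opow_pos _ omega0_pos))
    (fun β hβ => by
      obtain ⟨c', hc', hβc'⟩ := (lt_mul_iff_of_isSuccLimit isSuccLimit_omega0).1 (hω ▸ hβ)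
      obtain ⟨k, rfl⟩ := lt_omega0.1 hc'
      exact ⟨k, hβc'⟩)
  rw [← hlen]
  exact hrec.indecomposableAfterPrefix hle hfr (hlen ▸ isPrincipal_add_omega0_opow _)

theorem decomposableBelow_opow_succ {α : Ordinal.{u}} (hyp : IsWQOiFOfFinite α) {d : ℕ}
    (hD : DecomposableBelow (ω ^ (d : Ordinal.{u}))) (hdα : ω ^ (d : Ordinal.{u}) ≤ α) :
    DecomposableBelow (ω ^ ((d + 1 : ℕ) : Ordinal.{u})) := by
  intro P le hle σ hfr hσ
  rw [Nat.cast_succ, ← Order.succ_eq_add_one, opow_succ] at hσ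
  exact decomposable_of_length_lt_mul_omega0 (hD P le hle)
    (fun τ hτ hlen => (indecomposableAfterPrefix_of_length_eq_opow hyp hD hdα hle τ hτ hlen)
      |>.decomposable hτ (hD P le hle)) σ hfr hσ

theorem decomposableBelow_opow {n : ℕ} (hyp : IsWQOiFOfFinite (ω ^ (n : Ordinal.{u}))) :
    ∀ d ≤ n + 1, DecomposableBelow (ω ^ (d : Ordinal.{u}))
  | 0, _ => fun _ _ _ σ _ hσ => by
    rw [Nat.cast_zero, opow_zero, Order.lt_one_iff] at hσ
    exact absurd hσ σ.length_pos.ne'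
  | d + 1, hd => decomposableBelow_opow_succ hyp (decomposableBelow_opow hyp d (by omega))
    (opow_le_opow_right omega0_pos (by exact_mod_cast (by omega : d ≤ n)))

end

/-- Fix `n < ω` and assume that for every finite quasi-order `P` the quasi-order
`i^F_{ω^n}(P)` is a wqo.  Then, for any quasi-order `Q` :
(1) every finite-range sequence `σ` over `Q` of length exactly `ω^n` is either
indecomposable or decomposes as `σ₀ + σ₁` with `σ₀` finite-range of length `< ω^n` and
`σ₁` indecomposable finite-range of length exactly `ω^n`; and
(2) every finite-range sequence over `Q` of length `< ω^{n+1}` decomposes as a finite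
concatenation of indecomposable finite-range sequences of length `< ω^{n+1}`. -/
theorem sequence_decomposition (n : ℕ)
    (hyp : ∀ (P : Type u) (leP : P → P → Prop), Finite P → IsQO leP →
      IsWQO (fun σ τ : iF P leP (omega0 ^ (n : Ordinal.{u})) => SeqLE leP σ.1 τ.1))
    (Q : Type u) (le : Q → Q → Prop) (hqo : IsQO le) :
    (∀ σ : TSeq Q, σ.FinRange → σ.length = omega0 ^ (n : Ordinal.{u}) →
      (Indecomposable le σ ∨
        ∃ σ₀ σ₁ : TSeq Q,
          σ₀.FinRange ∧ σ₀.length < omega0 ^ (n : Ordinal.{u}) ∧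
          σ₁.FinRange ∧ σ₁.length = omega0 ^ (n : Ordinal.{u}) ∧
          Indecomposable le σ₁ ∧ σ.ValEq (σ₀.concat σ₁))) ∧
    (∀ σ : TSeq Q, σ.FinRange → σ.length < omega0 ^ ((n : Ordinal.{u}) + 1) →
      ∃ (τ : TSeq Q) (τs : List (TSeq Q)),
        (∀ ρ ∈ τ :: τs,
          ρ.FinRange ∧ ρ.length < omega0 ^ ((n : Ordinal.{u}) + 1) ∧
            Indecomposable le ρ) ∧
        σ.ValEq (TSeq.concatAll τ τs)) := by
  have hD := decomposableBelow_opow hyp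
  refine ⟨fun σ hfr hlen =>
    indecomposableAfterPrefix_of_length_eq_opow hyp (hD n n.le_succ) le_rfl hqo σ hfr hlen,
    fun σ hfr hlen => ?_⟩
  obtain ⟨τ, τs, hτ, hv⟩ := hD (n + 1) le_rfl Q le hqo σ hfr (by exact_mod_cast hlen)
  exact ⟨τ, τs, fun ρ hρ => ⟨(hτ ρ hρ).1, (hτ ρ hρ).2.1.trans_lt hlen, (hτ ρ hρ).2.2⟩, hv⟩
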